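/- arXiv:2205.06541 — 6 statements merged into one kernel-verified Lean document; each statement's English description precedes it below -/
import Mathlib

section
/- Let h_scal : [0,∞) → [0,∞) be defined by h_scal(t) = min(t², ℓ·t) for a fixed ℓ > 0. Then the convex envelope of h_scal is given by h_scal^conv(t) = t² if 0 ≤ t ≤ ℓ/2, and h_scal^conv(t) = ℓ·t − ℓ²/4 if t > ℓ/2. -/
open MeasureTheory Filter Set

noncomputable section

/-- Frobenius norm of a real matrix. -/
def frob {m n : ℕ} (ξ : Matrix (Fin m) (Fin n) ℝ) : ℝ :=
  Real.sqrt (∑ i, ∑ j, (ξ i j) ^ 2)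

/-- Convex envelope on a set `s`: the pointwise supremum of all functions convex on `s`
and bounded above by `f` on `s`. -/
def convEnvOn {E : Type*} [AddCommGroup E] [Module ℝ E] (s : Set E) (f : E → ℝ) : E → ℝ :=
  fun x => sSup {y | ∃ g : E → ℝ, ConvexOn ℝ s g ∧ (∀ z ∈ s, g z ≤ f z) ∧ y = g x}

/-- The open unit cube `(0,1)^n`. -/
def unitCube (n : ℕ) : Set (Fin n → ℝ) := Set.univ.pi fun _ => Set.Ioo (0 : ℝ) 1

/-- The gradient of `φ : ℝ^n → ℝ^m` as an `m × n` matrix. -/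
def gradMatrix {m n : ℕ} (φ : (Fin n → ℝ) → (Fin m → ℝ)) (x : Fin n → ℝ) :
    Matrix (Fin m) (Fin n) ℝ := fun i j => fderiv ℝ φ x (Pi.single j 1) i

/-- Smooth test functions compactly supported in the open unit cube. -/
def testFuns (m n : ℕ) : Set ((Fin n → ℝ) → (Fin m → ℝ)) :=
  {φ | ContDiff ℝ (⊤ : ℕ∞) φ ∧ HasCompactSupport φ ∧ tsupport φ ⊆ unitCube n}

/-- The quasiconvex envelope of `h`. -/
def qcEnv {m n : ℕ} (h : Matrix (Fin m) (Fin n) ℝ → ℝ)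
    (ξ : Matrix (Fin m) (Fin n) ℝ) : ℝ :=
  sInf {y | ∃ φ ∈ testFuns m n, y = ∫ x in unitCube n, h (ξ + gradMatrix φ x)}

/-- The recession function `F^∞(ξ) = limsup_{t→∞} F(tξ)/t`. -/
def recession {m n : ℕ} (F : Matrix (Fin m) (Fin n) ℝ → ℝ)
    (ξ : Matrix (Fin m) (Fin n) ℝ) : ℝ :=
  Filter.limsup (fun t : ℝ => F (t • ξ) / t) Filter.atTop

theorem stmt0 (ℓ : ℝ) (hℓ : 0 < ℓ) :
    ∀ t ∈ Set.Ici (0 : ℝ),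
      convEnvOn (Set.Ici (0 : ℝ)) (fun s => min (s ^ 2) (ℓ * s)) t
        = if t ≤ ℓ / 2 then t ^ 2 else ℓ * t - ℓ ^ 2 / 4 := by
  intro t ht
  set g : ℝ → ℝ := fun s => if s ≤ ℓ / 2 then s ^ 2 else ℓ * s - ℓ ^ 2 / 4 with hgdef
  -- derivative of g
  have hderiv : ∀ s : ℝ, HasDerivAt g (if s ≤ ℓ / 2 then 2 * s else ℓ) s := by
    intro s
    rcases lt_trichotomy s (ℓ / 2) with h | h | h
    · rw [if_pos h.le]
      have h2 : HasDerivAt (fun u : ℝ => u ^ 2) (2 * s) s := by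
        simpa using hasDerivAt_pow 2 s
      apply h2.congr_of_eventuallyEq
      filter_upwards [Iio_mem_nhds h] with u hu
      simp [hgdef, (mem_Iio.mp hu).le]
    · subst h
      rw [if_pos le_rfl]
      have h1 : HasDerivWithinAt g (2 * (ℓ / 2)) (Set.Iic (ℓ / 2)) (ℓ / 2) := by
        have h2 : HasDerivWithinAt (fun u : ℝ => u ^ 2) (2 * (ℓ / 2)) (Set.Iic (ℓ / 2)) (ℓ / 2) := by
          simpa using (hasDerivAt_pow 2 (ℓ / 2)).hasDerivWithinAt
        apply h2.congr
        · intro u hu; simp [hgdef, mem_Iic.mp hu]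
        · simp [hgdef]
      have h2 : HasDerivWithinAt g (2 * (ℓ / 2)) (Set.Ici (ℓ / 2)) (ℓ / 2) := by
        have h3 : HasDerivWithinAt (fun u : ℝ => ℓ * u - ℓ ^ 2 / 4) (2 * (ℓ / 2))
            (Set.Ici (ℓ / 2)) (ℓ / 2) := by
          have := ((hasDerivAt_id (ℓ / 2)).const_mul ℓ).sub_const (ℓ ^ 2 / 4)
          simpa [mul_comm] using this.hasDerivWithinAt.congr_deriv (by ring)
        apply h3.congr
        · intro u hu
          rcases eq_or_lt_of_le (mem_Ici.mp hu) with h4 | h4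
          · simp only [hgdef, ← h4, if_pos le_rfl]; ring
          · simp [hgdef, not_le.mpr h4]
        · simp [hgdef]; ring
      have := h1.union h2
      rw [Set.Iic_union_Ici] at this
      simpa using this.hasDerivAt univ_mem
    · rw [if_neg (not_le.mpr h)]
      have h2 : HasDerivAt (fun u : ℝ => ℓ * u - ℓ ^ 2 / 4) ℓ s := by
        simpa [mul_comm] using (((hasDerivAt_id s).const_mul ℓ).sub_const (ℓ ^ 2 / 4))
      apply h2.congr_of_eventuallyEq
      filter_upwards [Ioi_mem_nhds h] with u hu
      simp [hgdef, not_le.mpr (mem_Ioi.mp hu)]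
  have hdiff : Differentiable ℝ g := fun s => (hderiv s).differentiableAt
  have hgconv : ConvexOn ℝ (Set.Ici (0 : ℝ)) g := by
    apply MonotoneOn.convexOn_of_deriv (convex_Ici 0) hdiff.continuous.continuousOn
      hdiff.differentiableOn
    intro a _ b _ hab
    rw [(hderiv a).deriv, (hderiv b).deriv]
    split_ifs with h1 h2 h2
    · linarith
    · linarith
    · linarith
    · exact le_rfl
  have hgle : ∀ z ∈ Set.Ici (0 : ℝ), g z ≤ (fun s => min (s ^ 2) (ℓ * s)) z := by
    intro z hz
    have hz0 : (0 : ℝ) ≤ z := hz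
    simp only [hgdef, le_min_iff]
    split_ifs with h
    · exact ⟨le_rfl, by nlinarith⟩
    · push_neg at h
      exact ⟨by nlinarith, by nlinarith⟩
  set S : Set ℝ := {y | ∃ h : ℝ → ℝ, ConvexOn ℝ (Set.Ici (0 : ℝ)) h ∧
      (∀ z ∈ Set.Ici (0 : ℝ), h z ≤ (fun s => min (s ^ 2) (ℓ * s)) z) ∧ y = h t} with hSdef
  have hmem : g t ∈ S := ⟨g, hgconv, hgle, rfl⟩
  have hub : ∀ y ∈ S, y ≤ g t := by
    rintro y ⟨h, hconv, hle, rfl⟩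
    simp only [hgdef]
    by_cases hcase : t ≤ ℓ / 2
    · rw [if_pos hcase]
      exact (hle t ht).trans (min_le_left _ _)
    · rw [if_neg hcase]
      push_neg at hcase
      apply le_of_forall_pos_le_add
      intro ε hε
      set c : ℝ := ℓ / 2 with hcdef
      have hc : 0 < c := by positivity
      set u : ℝ := t - c with hudef
      have hu : 0 < u := by simp [hudef]; linarith
      set d : ℝ := u + u * c ^ 2 / ε with hddef
      have hd : 0 < d := by positivity
      set b : ℝ := c + d with hbdef
      have hμ : (0 : ℝ) ≤ u / d := by positivity
      have hlam : (0 : ℝ) ≤ (b - t) / d := by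
        apply div_nonneg _ hd.le
        have : b - t = u * c ^ 2 / ε := by simp [hbdef, hddef, hudef]; ring
        rw [this]; positivity
      have hd' : d ≠ 0 := ne_of_gt hd
      have hsum : (b - t) / d + u / d = 1 := by
        rw [hbdef, hudef]
        field_simp
        ring
      have hcomb := hconv.2 (mem_Ici.mpr hc.le) (mem_Ici.mpr (by positivity : (0:ℝ) ≤ b))
        hlam hμ hsum
      have hpt : ((b - t) / d) • c + (u / d) • b = t := by
        rw [smul_eq_mul, smul_eq_mul, hbdef, hudef]
        field_simp
        ring
      rw [hpt] at hcomb
      have hhc : h c ≤ c ^ 2 := by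
        have := hle c (mem_Ici.mpr hc.le)
        simp only at this
        refine this.trans ?_
        exact min_le_left _ _
      have hhb : h b ≤ ℓ * b := by
        have := hle b (mem_Ici.mpr (by positivity : (0:ℝ) ≤ b))
        exact this.trans (min_le_right _ _)
      have h1 : h t ≤ (b - t) / d * c ^ 2 + u / d * (ℓ * b) := by
        calc h t ≤ (b - t) / d * h c + u / d * h b := hcomb
        _ ≤ (b - t) / d * c ^ 2 + u / d * (ℓ * b) := by
            gcongr
      have h2 : (b - t) / d * c ^ 2 + u / d * (ℓ * b) = (ℓ * t - ℓ ^ 2 / 4) + u * c ^ 2 / d := by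
        have hℓc : ℓ = 2 * c := by rw [hcdef]; ring
        rw [hℓc, hbdef, hudef]
        field_simp
        ring
      have h3 : u * c ^ 2 / d ≤ ε := by
        rw [div_le_iff₀ hd]
        have : ε * d = ε * u + u * c ^ 2 := by
          rw [hddef]; field_simp
        rw [this]
        nlinarith
      linarith [h1, h2 ▸ h1]
  have hbdd : BddAbove S := ⟨g t, hub⟩
  have hS : sSup S = g t := le_antisymm (csSup_le ⟨g t, hmem⟩ hub) (le_csSup hbdd hmem)
  show sSup S = _
  rw [hS]
end
end

section
/- Let ℓ > 0 and define h : ℝ^{m×n} → [0,∞) by h(ξ) = min(|ξ|², ℓ|ξ|), where |·| is the Frobenius norm. Then the convex envelope of h satisfies h^conv(ξ) = |ξ|² if |ξ| ≤ ℓ/2, and h^conv(ξ) = ℓ|ξ| − ℓ²/4 if |ξ| > ℓ/2. -/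
open MeasureTheory Filter Set

noncomputable section

/-- the envelope profile -/
def psi (ℓ r : ℝ) : ℝ := if r ≤ ℓ / 2 then r ^ 2 else ℓ * r - ℓ ^ 2 / 4

lemma psi_support (ℓ : ℝ) (r s : ℝ) (hs : s ≤ ℓ / 2) : 2 * s * r - s ^ 2 ≤ psi ℓ r := by
  unfold psi; split_ifs with h
  · nlinarith [sq_nonneg (r - s)]
  · nlinarith [mul_nonneg (by linarith : (0:ℝ) ≤ ℓ/2 - s) (by linarith : (0:ℝ) ≤ 2*r - ℓ),
      sq_nonneg (ℓ/2 - s)]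

lemma psi_touch (ℓ r : ℝ) : psi ℓ r = 2 * (min r (ℓ/2)) * r - (min r (ℓ/2)) ^ 2 := by
  unfold psi; rcases le_or_gt r (ℓ/2) with h | h
  · rw [if_pos h, min_eq_left h]; ring
  · rw [if_neg (not_le.2 h), min_eq_right h.le]; ring

lemma psi_combo (ℓ p q a b : ℝ) (ha : 0 ≤ a) (hb : 0 ≤ b) (hab : a + b = 1) :
    psi ℓ (a * p + b * q) ≤ a * psi ℓ p + b * psi ℓ q := by
  set s := min (a * p + b * q) (ℓ/2) with hs
  have hsle : s ≤ ℓ / 2 := min_le_right _ _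
  have h1 := psi_support ℓ p s hsle
  have h2 := psi_support ℓ q s hsle
  have key : psi ℓ (a * p + b * q) = a * (2*s*p - s^2) + b * (2*s*q - s^2) := by
    rw [psi_touch, ← hs]; nlinarith [hab]
  rw [key]
  exact add_le_add (mul_le_mul_of_nonneg_left h1 ha) (mul_le_mul_of_nonneg_left h2 hb)

lemma psi_mono (ℓ : ℝ) (hℓ : 0 < ℓ) {x y : ℝ} (hx : 0 ≤ x) (hxy : x ≤ y) :
    psi ℓ x ≤ psi ℓ y := by
  unfold psi; split_ifs with h1 h2 h2 <;> nlinarith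

lemma psi_nonneg (ℓ : ℝ) (hℓ : 0 < ℓ) {r : ℝ} (hr : 0 ≤ r) : 0 ≤ psi ℓ r := by
  unfold psi; split_ifs with h <;> nlinarith

lemma psi_le_min (ℓ : ℝ) (hℓ : 0 < ℓ) {r : ℝ} (hr : 0 ≤ r) :
    psi ℓ r ≤ min (r ^ 2) (ℓ * r) := by
  unfold psi; split_ifs with h <;> refine le_min ?_ ?_ <;> nlinarith [sq_nonneg (r - ℓ/2)]

lemma frob_nonneg {m n : ℕ} (ξ : Matrix (Fin m) (Fin n) ℝ) : 0 ≤ frob ξ :=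
  Real.sqrt_nonneg _

lemma frob_eq_norm {m n : ℕ} (ξ : Matrix (Fin m) (Fin n) ℝ) :
    frob ξ = ‖(WithLp.equiv 2 ((Fin m × Fin n) → ℝ)).symm (fun p => ξ p.1 p.2)‖ := by
  rw [EuclideanSpace.norm_eq]
  simp [frob, Fintype.sum_prod_type, Real.norm_eq_abs, sq_abs]

lemma frob_add_le {m n : ℕ} (x y : Matrix (Fin m) (Fin n) ℝ) :
    frob (x + y) ≤ frob x + frob y := by
  rw [frob_eq_norm, frob_eq_norm, frob_eq_norm]
  have : (WithLp.equiv 2 ((Fin m × Fin n) → ℝ)).symm (fun p => (x + y) p.1 p.2)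
      = (WithLp.equiv 2 ((Fin m × Fin n) → ℝ)).symm (fun p => x p.1 p.2)
        + (WithLp.equiv 2 ((Fin m × Fin n) → ℝ)).symm (fun p => y p.1 p.2) := by
    rfl
  rw [this]; exact norm_add_le _ _

lemma frob_smul {m n : ℕ} {c : ℝ} (hc : 0 ≤ c) (ξ : Matrix (Fin m) (Fin n) ℝ) :
    frob (c • ξ) = c * frob ξ := by
  unfold frob
  have : ∑ i, ∑ j, ((c • ξ) i j) ^ 2 = c ^ 2 * ∑ i, ∑ j, (ξ i j) ^ 2 := by
    simp [Matrix.smul_apply, Finset.mul_sum, mul_pow]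
  rw [this, Real.sqrt_mul (sq_nonneg c), Real.sqrt_sq hc]

lemma G_convex {m n : ℕ} (ℓ : ℝ) (hℓ : 0 < ℓ) :
    ConvexOn ℝ Set.univ (fun ξ : Matrix (Fin m) (Fin n) ℝ => psi ℓ (frob ξ)) := by
  refine ⟨convex_univ, ?_⟩
  intro x _ y _ a b ha hb hab
  have h1 : frob (a • x + b • y) ≤ a * frob x + b * frob y := by
    calc frob (a • x + b • y) ≤ frob (a • x) + frob (b • y) := frob_add_le _ _
      _ = a * frob x + b * frob y := by rw [frob_smul ha, frob_smul hb]
  calc psi ℓ (frob (a • x + b • y)) ≤ psi ℓ (a * frob x + b * frob y) :=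
        psi_mono ℓ hℓ (frob_nonneg _) h1
    _ ≤ a * psi ℓ (frob x) + b * psi ℓ (frob y) :=
        psi_combo ℓ _ _ a b ha hb hab

lemma ratio_tendsto (c d : ℝ) :
    Tendsto (fun t : ℝ => (t - c) / (t - d)) atTop (nhds 1) := by
  have h0 : Tendsto (fun t : ℝ => (d - c) / (t - d)) atTop (nhds 0) :=
    Tendsto.div_atTop tendsto_const_nhds (tendsto_atTop_add_const_right _ (-d) tendsto_id)
  have h1 : Tendsto (fun t : ℝ => 1 + (d - c) / (t - d)) atTop (nhds 1) := by
    simpa using tendsto_const_nhds.add h0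
  refine h1.congr' ?_
  filter_upwards [eventually_gt_atTop d] with t ht
  have hne : t - d ≠ 0 := by linarith
  field_simp
  ring

lemma env_le {m n : ℕ} (ℓ : ℝ) (hℓ : 0 < ℓ) (g : Matrix (Fin m) (Fin n) ℝ → ℝ)
    (hg : ConvexOn ℝ Set.univ g)
    (hle : ∀ z, g z ≤ min ((frob z) ^ 2) (ℓ * frob z))
    (ξ : Matrix (Fin m) (Fin n) ℝ) : g ξ ≤ psi ℓ (frob ξ) := by
  set r := frob ξ with hr
  rcases le_or_gt r (ℓ / 2) with h | h
  · calc g ξ ≤ min (r ^ 2) (ℓ * r) := hle ξ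
      _ ≤ r ^ 2 := min_le_left _ _
      _ = psi ℓ r := by rw [psi, if_pos h]
  · have hr0 : 0 < r := lt_of_le_of_lt (by positivity) h
    set a : ℝ := ℓ / (2 * r) with ha
    have ha0 : 0 < a := by positivity
    have har : a * r = ℓ / 2 := by rw [ha, div_mul_eq_mul_div, mul_div_mul_right _ _ hr0.ne']
    have ha1 : a < 1 := by
      rw [ha, div_lt_one (by positivity)]; linarith
    -- the bound for each t ≥ 2
    have bound : ∀ t : ℝ, 2 ≤ t →
        g ξ ≤ (ℓ ^ 2 / 4) * ((t - 1) / (t - a)) + ((1 - a) * ℓ * r) * ((t - 0) / (t - a)) := by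
      intro t ht
      have hta : 0 < t - a := by linarith
      set lam : ℝ := (t - 1) / (t - a) with hlam
      set mu : ℝ := (1 - a) / (t - a) with hmu
      have hlam0 : 0 ≤ lam := div_nonneg (by linarith) hta.le
      have hmu0 : 0 ≤ mu := div_nonneg (by linarith) hta.le
      have hsum : lam + mu = 1 := by
        rw [hlam, hmu, ← add_div, div_eq_one_iff_eq hta.ne']; ring
      have hcomb : lam * a + mu * t = 1 := by
        rw [hlam, hmu]; field_simp; ring
      have hpt : lam • (a • ξ) + mu • (t • ξ) = ξ := by
        rw [smul_smul, smul_smul, ← add_smul, hcomb, one_smul]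
      have hcv := hg.2 (Set.mem_univ (a • ξ)) (Set.mem_univ (t • ξ)) hlam0 hmu0 hsum
      rw [hpt] at hcv
      have h1 : g (a • ξ) ≤ ℓ ^ 2 / 4 := by
        calc g (a • ξ) ≤ min ((frob (a • ξ)) ^ 2) (ℓ * frob (a • ξ)) := hle _
          _ ≤ (frob (a • ξ)) ^ 2 := min_le_left _ _
          _ = ℓ ^ 2 / 4 := by rw [frob_smul ha0.le, ← hr, har]; ring
      have h2 : g (t • ξ) ≤ ℓ * (t * r) := by
        calc g (t • ξ) ≤ min ((frob (t • ξ)) ^ 2) (ℓ * frob (t • ξ)) := hle _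
          _ ≤ ℓ * frob (t • ξ) := min_le_right _ _
          _ = ℓ * (t * r) := by rw [frob_smul (by linarith : (0:ℝ) ≤ t), hr]
      have := hcv.trans (add_le_add (mul_le_mul_of_nonneg_left h1 hlam0)
        (mul_le_mul_of_nonneg_left h2 hmu0))
      calc g ξ ≤ lam * (ℓ ^ 2 / 4) + mu * (ℓ * (t * r)) := this
        _ = (ℓ ^ 2 / 4) * ((t - 1) / (t - a)) + ((1 - a) * ℓ * r) * ((t - 0) / (t - a)) := by
            rw [hlam, hmu]; ring
    have hF : Tendsto (fun t : ℝ => (ℓ ^ 2 / 4) * ((t - 1) / (t - a))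
        + ((1 - a) * ℓ * r) * ((t - 0) / (t - a))) atTop
        (nhds (ℓ ^ 2 / 4 * 1 + (1 - a) * ℓ * r * 1)) :=
      (tendsto_const_nhds.mul (ratio_tendsto 1 a)).add
        (tendsto_const_nhds.mul (ratio_tendsto 0 a))
    have hlim : g ξ ≤ ℓ ^ 2 / 4 * 1 + (1 - a) * ℓ * r * 1 := by
      refine ge_of_tendsto hF ?_
      filter_upwards [eventually_ge_atTop (2:ℝ)] with t ht using bound t ht
    have : ℓ ^ 2 / 4 * 1 + (1 - a) * ℓ * r * 1 = ℓ * r - ℓ ^ 2 / 4 := by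
      have : a * r = ℓ / 2 := har
      nlinarith
    rw [this] at hlim
    calc g ξ ≤ ℓ * r - ℓ ^ 2 / 4 := hlim
      _ = psi ℓ r := by rw [psi, if_neg (not_le.2 h)]

theorem stmt1 (m n : ℕ) (hm : 1 ≤ m) (hn : 1 ≤ n) (ℓ : ℝ) (hℓ : 0 < ℓ) :
    ∀ ξ : Matrix (Fin m) (Fin n) ℝ,
      convEnvOn Set.univ (fun η => min ((frob η) ^ 2) (ℓ * frob η)) ξ
        = if frob ξ ≤ ℓ / 2 then (frob ξ) ^ 2 else ℓ * frob ξ - ℓ ^ 2 / 4 := by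
  intro ξ
  have key : convEnvOn Set.univ (fun η => min ((frob η) ^ 2) (ℓ * frob η)) ξ
      = psi ℓ (frob ξ) := by
    unfold convEnvOn
    have hub : ∀ y ∈ {y | ∃ g : Matrix (Fin m) (Fin n) ℝ → ℝ, ConvexOn ℝ Set.univ g ∧
        (∀ z ∈ Set.univ, g z ≤ min ((frob z) ^ 2) (ℓ * frob z)) ∧ y = g ξ},
        y ≤ psi ℓ (frob ξ) := by
      rintro y ⟨g, hg, hle, rfl⟩
      exact env_le ℓ hℓ g hg (fun z => hle z (Set.mem_univ z)) ξ
    have hmem : psi ℓ (frob ξ) ∈ {y | ∃ g : Matrix (Fin m) (Fin n) ℝ → ℝ, ConvexOn ℝ Set.univ g ∧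
        (∀ z ∈ Set.univ, g z ≤ min ((frob z) ^ 2) (ℓ * frob z)) ∧ y = g ξ} :=
      ⟨fun η => psi ℓ (frob η), G_convex ℓ hℓ,
        fun z _ => psi_le_min ℓ hℓ (frob_nonneg z), rfl⟩
    exact le_antisymm
      (Real.sSup_le hub (psi_nonneg ℓ hℓ (frob_nonneg ξ)))
      (le_csSup ⟨psi ℓ (frob ξ), hub⟩ hmem)
  rw [key]; rfl
end
end

section
/- Let ℓ > 0 and h(ξ) = min(|ξ|², ℓ|ξ|) on ℝ^{m×n}, with quasiconvex envelope h^qc. Then for all ξ ∈ ℝ^{m×n}, ℓ|ξ| − ℓ²/4 ≤ h^qc(ξ) ≤ ℓ|ξ|. -/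
open MeasureTheory Filter Set

noncomputable section

lemma frob_sq {m n : ℕ} (ξ : Matrix (Fin m) (Fin n) ℝ) :
    (frob ξ) ^ 2 = ∑ i, ∑ j, (ξ i j) ^ 2 := by
  apply Real.sq_sqrt
  positivity

lemma frob_continuous {m n : ℕ} : Continuous (frob (m := m) (n := n)) := by
  apply Real.continuous_sqrt.comp
  apply continuous_finset_sum _ fun i _ => continuous_finset_sum _ fun j _ => ?_
  exact ((continuous_apply j).comp (continuous_apply i)).pow 2

-- Cauchy-Schwarz for frob
lemma inner_le_frob {m n : ℕ} (A B : Matrix (Fin m) (Fin n) ℝ) :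
    ∑ i, ∑ j, A i j * B i j ≤ frob A * frob B := by
  have h1 : ∑ i, ∑ j, A i j * B i j = ∑ p : Fin m × Fin n, A p.1 p.2 * B p.1 p.2 := by
    rw [Fintype.sum_prod_type]
  have h2 : (∑ p : Fin m × Fin n, A p.1 p.2 * B p.1 p.2) ^ 2 ≤
      (∑ p : Fin m × Fin n, A p.1 p.2 ^ 2) * ∑ p : Fin m × Fin n, B p.1 p.2 ^ 2 :=
    Finset.sum_mul_sq_le_sq_mul_sq _ _ _
  have hA : (∑ p : Fin m × Fin n, A p.1 p.2 ^ 2) = (frob A) ^ 2 := by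
    rw [frob_sq, Fintype.sum_prod_type]
  have hB : (∑ p : Fin m × Fin n, B p.1 p.2 ^ 2) = (frob B) ^ 2 := by
    rw [frob_sq, Fintype.sum_prod_type]
  rw [h1]
  set s := ∑ p : Fin m × Fin n, A p.1 p.2 * B p.1 p.2 with hs
  have habs : |s| ≤ frob A * frob B := by
    rw [← Real.sqrt_sq_eq_abs]
    calc Real.sqrt (s ^ 2) ≤ Real.sqrt (frob A ^ 2 * frob B ^ 2) :=
          Real.sqrt_le_sqrt (by rw [← hA, ← hB]; exact h2)
      _ = frob A * frob B := by
          rw [← mul_pow, Real.sqrt_sq (mul_nonneg (frob_nonneg A) (frob_nonneg B))]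
  linarith [le_abs_self s]

lemma unitCube_subset_Icc {n : ℕ} : unitCube n ⊆ Icc (0 : Fin n → ℝ) 1 := by
  intro x hx
  refine ⟨fun i => (hx i (mem_univ i)).1.le, fun i => (hx i (mem_univ i)).2.le⟩

lemma volume_unitCube {n : ℕ} : volume (unitCube n) = 1 := by
  rw [unitCube, volume_pi_pi]
  simp

lemma grad_entry_cont {m n : ℕ} {φ : (Fin n → ℝ) → (Fin m → ℝ)} (hφ : ContDiff ℝ (⊤ : ℕ∞) φ)
    (i : Fin m) (j : Fin n) : Continuous fun x => gradMatrix φ x i j :=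
  (continuous_apply i).comp ((hφ.continuous_fderiv (by simp)).clm_apply continuous_const)

lemma grad_entry_integrable {m n : ℕ} {φ : (Fin n → ℝ) → (Fin m → ℝ)} (hφ : ContDiff ℝ (⊤ : ℕ∞) φ)
    (hc : HasCompactSupport φ) (i : Fin m) (j : Fin n) :
    Integrable (fun x => gradMatrix φ x i j) := by
  apply (grad_entry_cont hφ i j).integrable_of_hasCompactSupport
  exact (hc.fderiv_apply ℝ (Pi.single j 1)).comp_left (g := fun y : Fin m → ℝ => y i) rfl

lemma integral_fderiv_dir_zero {n : ℕ} (ψ : (Fin n → ℝ) → ℝ) (h1 : ContDiff ℝ (⊤ : ℕ∞) ψ)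
    (h2 : HasCompactSupport ψ) (v : Fin n → ℝ) : ∫ x, fderiv ℝ ψ x v = 0 := by
  have hDc : Continuous fun x => fderiv ℝ ψ x v :=
    (h1.continuous_fderiv (by simp)).clm_apply continuous_const
  have hDi : Integrable (fun x => fderiv ℝ ψ x v) :=
    hDc.integrable_of_hasCompactSupport (h2.fderiv_apply ℝ v)
  have hψi : Integrable ψ := h1.continuous.integrable_of_hasCompactSupport h2
  have := integral_mul_fderiv_eq_neg_fderiv_mul_of_integrable
    (f := fun _ : Fin n → ℝ => (1:ℝ)) (g := ψ) (v := v) (μ := volume)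
    (by simpa [fderiv_const] using (integrable_zero _ ℝ volume))
    (by simpa using hDi) (by simpa using hψi)
    (fun x _ => differentiableAt_const (1:ℝ)) (fun x _ => h1.differentiable (by simp) x)
  simpa [fderiv_const] using this

lemma integral_grad_entry_zero {m n : ℕ} {φ : (Fin n → ℝ) → (Fin m → ℝ)}
    (hφ : φ ∈ testFuns m n) (i : Fin m) (j : Fin n) :
    ∫ x in unitCube n, gradMatrix φ x i j = 0 := by
  obtain ⟨h1, h2, h3⟩ := hφ
  have hvan : ∀ x, x ∉ unitCube n → gradMatrix φ x i j = 0 := by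
    intro x hx
    have hf0 : fderiv ℝ φ x = 0 := by
      apply image_eq_zero_of_notMem_tsupport
      exact fun hmem => hx (h3 (tsupport_fderiv_subset ℝ hmem))
    simp [gradMatrix, hf0]
  rw [setIntegral_eq_integral_of_forall_compl_eq_zero hvan]
  have hψd : ∀ x, fderiv ℝ (fun y => φ y i) x =
      (ContinuousLinearMap.proj (R := ℝ) (φ := fun _ : Fin m => ℝ) i).comp (fderiv ℝ φ x) :=
    fun x => (((ContinuousLinearMap.proj (R := ℝ) (φ := fun _ : Fin m => ℝ) i).hasFDerivAt).comp x
      (h1.differentiable (by simp) x).hasFDerivAt).fderiv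
  have key := integral_fderiv_dir_zero (fun y => φ y i)
    ((ContinuousLinearMap.proj (R := ℝ) (φ := fun _ : Fin m => ℝ) i).contDiff.comp h1)
    (h2.comp_left (g := fun y : Fin m → ℝ => y i) rfl) (Pi.single j 1)
  calc ∫ x, gradMatrix φ x i j = ∫ x, fderiv ℝ (fun y => φ y i) x (Pi.single j 1) := by
        congr 1; funext x; rw [hψd]; rfl
    _ = 0 := key

theorem stmt2 (m n : ℕ) (hm : 1 ≤ m) (hn : 1 ≤ n) (ℓ : ℝ) (hℓ : 0 < ℓ) :
    ∀ ξ : Matrix (Fin m) (Fin n) ℝ,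
      ℓ * frob ξ - ℓ ^ 2 / 4 ≤ qcEnv (fun η => min ((frob η) ^ 2) (ℓ * frob η)) ξ ∧
      qcEnv (fun η => min ((frob η) ^ 2) (ℓ * frob η)) ξ ≤ ℓ * frob ξ := by
  intro ξ
  set h : Matrix (Fin m) (Fin n) ℝ → ℝ := fun η => min ((frob η) ^ 2) (ℓ * frob η) with hh
  set S := {y | ∃ φ ∈ testFuns m n, y = ∫ x in unitCube n, h (ξ + gradMatrix φ x)} with hS
  -- the zero test function
  have ht0 : tsupport (fun _ : Fin n → ℝ => (0 : Fin m → ℝ)) = ∅ :=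
    tsupport_eq_empty_iff.mpr rfl
  have h0mem : (fun _ : Fin n → ℝ => (0 : Fin m → ℝ)) ∈ testFuns m n :=
    ⟨contDiff_const, by rw [HasCompactSupport, ht0]; exact isCompact_empty,
      by rw [ht0]; exact empty_subset _⟩
  have hgrad0 : ∀ x : Fin n → ℝ, gradMatrix (fun _ : Fin n → ℝ => (0 : Fin m → ℝ)) x = 0 := by
    intro x; funext i j; simp [gradMatrix, fderiv_const]
  have hy0 : (h ξ) ∈ S := by
    refine ⟨_, h0mem, ?_⟩
    have : ∀ x : Fin n → ℝ, h (ξ + gradMatrix (fun _ : Fin n → ℝ => (0 : Fin m → ℝ)) x) = h ξ := by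
      intro x; rw [hgrad0, add_zero]
    rw [show (∫ x in unitCube n, h (ξ + gradMatrix (fun _ : Fin n → ℝ => (0 : Fin m → ℝ)) x))
        = ∫ _x in unitCube n, h ξ from by simp_rw [this]]
    rw [setIntegral_const, measureReal_def, volume_unitCube, ENNReal.toReal_one, one_smul]
  -- every element of S is nonnegative
  have hnonneg : ∀ y ∈ S, (0:ℝ) ≤ y := by
    rintro y ⟨φ, hφ, rfl⟩
    apply integral_nonneg
    intro x
    exact le_min (sq_nonneg _) (mul_nonneg hℓ.le (frob_nonneg _))
  have hbdd : BddBelow S := ⟨0, hnonneg⟩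
  constructor
  · -- lower bound
    apply le_csInf ⟨_, hy0⟩
    rintro b ⟨φ, hφ, rfl⟩
    rcases eq_or_lt_of_le (frob_nonneg ξ) with hf0 | hfpos
    · have : (0:ℝ) ≤ ∫ x in unitCube n, h (ξ + gradMatrix φ x) :=
        hnonneg _ ⟨φ, hφ, rfl⟩
      nlinarith [sq_nonneg ℓ]
    · -- main case
      set f := frob ξ with hf
      set L : (Fin n → ℝ) → ℝ := fun x =>
        (ℓ * f - ℓ ^ 2 / 4) + ∑ i, ∑ j, ((ℓ / f) * ξ i j) * gradMatrix φ x i j with hL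
      have hint0 : ∀ i j, ∫ x in unitCube n, gradMatrix φ x i j = 0 :=
        fun i j => integral_grad_entry_zero hφ i j
      obtain ⟨hφ1, hφ2, hφ3⟩ := hφ
      have hGint : ∀ (i : Fin m) (j : Fin n),
          IntegrableOn (fun x => gradMatrix φ x i j) (unitCube n) :=
        fun i j => (grad_entry_integrable hφ1 hφ2 i j).integrableOn
      have hvolfin : (volume (unitCube n)) < ⊤ := by rw [volume_unitCube]; exact ENNReal.one_lt_top
      -- integrability of L
      have hLint : IntegrableOn L (unitCube n) := by
        apply Integrable.add
        · exact (integrableOn_const hvolfin.ne)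
        · apply integrable_finset_sum
          intro i _
          apply integrable_finset_sum
          intro j _
          exact (hGint i j).const_mul _
      -- integrability of h ∘ (ξ + G)
      have hGc : Continuous fun x => gradMatrix φ x :=
        continuous_pi fun i => continuous_pi fun j => grad_entry_cont hφ1 i j
      have hHc : Continuous fun x => h (ξ + gradMatrix φ x) := by
        have hfr : Continuous fun x => frob (ξ + gradMatrix φ x) :=
          frob_continuous.comp (continuous_const.add hGc)
        exact (hfr.pow 2).min (continuous_const.mul hfr)
      have hHint : IntegrableOn (fun x => h (ξ + gradMatrix φ x)) (unitCube n) :=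
        (hHc.continuousOn.integrableOn_compact isCompact_Icc).mono_set unitCube_subset_Icc
      -- pointwise bound L ≤ h ∘ (ξ + G)
      have hpt : ∀ x, L x ≤ h (ξ + gradMatrix φ x) := by
        intro x
        set G := gradMatrix φ x with hG
        set t := frob (ξ + G) with hts
        have ht0 : 0 ≤ t := frob_nonneg _
        have hCS : ∑ i, ∑ j, ξ i j * (ξ + G) i j ≤ f * t := inner_le_frob ξ (ξ + G)
        have hexp : ∑ i, ∑ j, ξ i j * (ξ + G) i j
            = f ^ 2 + ∑ i, ∑ j, ξ i j * G i j := by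
          rw [frob_sq]
          rw [← Finset.sum_add_distrib]
          apply Finset.sum_congr rfl
          intro i _
          rw [← Finset.sum_add_distrib]
          apply Finset.sum_congr rfl
          intro j _
          simp [Matrix.add_apply]
          ring
        have hLval : L x = (ℓ / f) * (∑ i, ∑ j, ξ i j * (ξ + G) i j) - ℓ ^ 2 / 4 := by
          rw [hexp, hL]
          have : (ℓ / f) * f ^ 2 = ℓ * f := by field_simp
          rw [mul_add, this]
          rw [Finset.mul_sum]
          simp_rw [Finset.mul_sum, mul_assoc]
          ring
        have h1 : (ℓ / f) * (∑ i, ∑ j, ξ i j * (ξ + G) i j) ≤ ℓ * t := by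
          rw [div_mul_eq_mul_div, div_le_iff₀ hfpos]
          nlinarith [hCS]
        rw [hLval]
        apply le_min
        · nlinarith [sq_nonneg (t - ℓ / 2)]
        · nlinarith [sq_nonneg ℓ]
      -- integral of L
      have hLI : ∫ x in unitCube n, L x = ℓ * f - ℓ ^ 2 / 4 := by
        rw [hL]
        rw [integral_add (show Integrable (fun _ => ℓ * f - ℓ ^ 2 / 4) (volume.restrict (unitCube n)) from integrableOn_const hvolfin.ne enorm_ne_top)
          (integrable_finset_sum _ fun i _ => integrable_finset_sum _ fun j _ =>
            (hGint i j).const_mul _)]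
        rw [setIntegral_const, measureReal_def, volume_unitCube, ENNReal.toReal_one, one_smul]
        rw [integral_finset_sum _ fun i _ => integrable_finset_sum _ fun j _ =>
            (hGint i j).const_mul _]
        have : ∀ i : Fin m, ∫ x in unitCube n, ∑ j, ((ℓ / f) * ξ i j) * gradMatrix φ x i j = 0 := by
          intro i
          rw [integral_finset_sum _ fun j _ => (hGint i j).const_mul _]
          apply Finset.sum_eq_zero
          intro j _
          rw [MeasureTheory.integral_const_mul, hint0 i j, mul_zero]
        simp [this]
      calc ℓ * f - ℓ ^ 2 / 4 = ∫ x in unitCube n, L x := hLI.symm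
        _ ≤ ∫ x in unitCube n, h (ξ + gradMatrix φ x) := integral_mono hLint hHint hpt
  · -- upper bound
    have h1 : qcEnv h ξ ≤ h ξ := csInf_le hbdd hy0
    exact h1.trans (min_le_right _ _)
end
end

section
/- Let ξ ∈ ℝ^{m×n} with rank ξ ≥ 2. Define the linear map T on the space of tensors Γ ∈ ℝ^{m×n×n} symmetric in the last two indices (Γ_{ijk} = Γ_{ikj}) by (TΓ)_{ijk} := Γ_{ijk} − ξ_{ij} Σ_{a,b} ξ_{ab} Γ_{abk}. Then T is injective. -/
open MeasureTheory Filter Set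

noncomputable section

theorem stmt4 (m n : ℕ) (ξ : Matrix (Fin m) (Fin n) ℝ) (hrank : 2 ≤ ξ.rank)
    (T : (Fin m → Fin n → Fin n → ℝ) → (Fin m → Fin n → Fin n → ℝ))
    (hT : ∀ Γ i j k, T Γ i j k = Γ i j k - ξ i j * ∑ a, ∑ b, ξ a b * Γ a b k) :
    ∀ Γ₁ Γ₂ : Fin m → Fin n → Fin n → ℝ,
      (∀ i j k, Γ₁ i j k = Γ₁ i k j) → (∀ i j k, Γ₂ i j k = Γ₂ i k j) →
      T Γ₁ = T Γ₂ → Γ₁ = Γ₂ := by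
  intro Γ₁ Γ₂ h1 h2 hTeq
  set Δ : Fin m → Fin n → Fin n → ℝ := fun i j k => Γ₁ i j k - Γ₂ i j k with hΔ
  set c : Fin n → ℝ := fun k => ∑ a, ∑ b, ξ a b * Δ a b k with hcdef
  have key : ∀ i j k, Δ i j k = ξ i j * c k := by
    intro i j k
    have h := congrFun (congrFun (congrFun hTeq i) j) k
    rw [hT, hT] at h
    have : Γ₁ i j k - Γ₂ i j k
        = ξ i j * (∑ a, ∑ b, ξ a b * Γ₁ a b k - ∑ a, ∑ b, ξ a b * Γ₂ a b k) := by
      rw [mul_sub]; linarith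
    simp only [hΔ, hcdef]
    rw [this]
    congr 1
    rw [← Finset.sum_sub_distrib]
    congr 1; ext a
    rw [← Finset.sum_sub_distrib]
    congr 1; ext b
    ring
  have hsymmix : ∀ i j k, ξ i j * c k = ξ i k * c j := by
    intro i j k
    rw [← key, ← key, hΔ]
    simp only
    rw [h1 i j k, h2 i j k]
  have hc0 : ∀ k, c k = 0 := by
    by_contra hcon
    push_neg at hcon
    obtain ⟨k0, hk0⟩ := hcon
    have hξ : ξ = Matrix.vecMulVec (fun i => ξ i k0 / c k0) c := by
      ext i j
      have := hsymmix i j k0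
      rw [Matrix.vecMulVec_apply]; field_simp
      linarith [hsymmix i j k0]
    have : ξ.rank ≤ 1 := by
      rw [hξ, Matrix.vecMulVec_eq (Fin 1)]
      calc (Matrix.replicateCol (Fin 1) (fun i => ξ i k0 / c k0) * Matrix.replicateRow (Fin 1) c).rank
          ≤ (Matrix.replicateCol (Fin 1) (fun i => ξ i k0 / c k0)).rank := Matrix.rank_mul_le_left _ _
        _ ≤ Fintype.card (Fin 1) := Matrix.rank_le_card_width _
        _ = 1 := by simp
    omega
  funext i j k
  have := key i j k
  rw [hc0 k, mul_zero, hΔ] at this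
  simp only at this
  linarith
end
end

section
/- Fix a matrix A ∈ ℝ^{m×n} with |A| > 1/2. For η ∈ ℝ^{m×n} write η^∥ := (η·A)/|A| ∈ ℝ and η^⊥ := η − (A/|A|)η^∥. Let L(η) := η^∥ − 1/4, h(η) := min(|η|², |η|), and g := h − L. Then for every ε ∈ (0,1] there is a constant C_ε > 0 such that |η^⊥| ≤ ε(|η^∥| + 1) + C_ε g(η) for all η ∈ ℝ^{m×n}. -/
open MeasureTheory Filter Set

noncomputable section

set_option maxHeartbeats 1600000 in
theorem stmt7 (m n : ℕ) (A : Matrix (Fin m) (Fin n) ℝ) (hA : 1 / 2 < frob A) :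
    ∀ ε ∈ Set.Ioc (0 : ℝ) 1, ∃ C > (0 : ℝ), ∀ η : Matrix (Fin m) (Fin n) ℝ,
      frob (η - (((∑ i, ∑ j, η i j * A i j) / frob A) / frob A) • A)
        ≤ ε * (|(∑ i, ∑ j, η i j * A i j) / frob A| + 1)
          + C * (min ((frob η) ^ 2) (frob η)
              - ((∑ i, ∑ j, η i j * A i j) / frob A - 1 / 4)) := by
  rintro ε ⟨hε0, hε1⟩
  refine ⟨4 / ε, by positivity, ?_⟩
  intro η
  have ha0 : (0 : ℝ) < frob A := lt_trans (by norm_num) hA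
  set a := frob A with ha
  set P := ∑ i, ∑ j, η i j * A i j with hP
  set p := P / a with hp
  set q := frob (η - (p / a) • A) with hq
  set r := frob η with hr
  have hq0 : 0 ≤ q := Real.sqrt_nonneg _
  have hr0 : 0 ≤ r := Real.sqrt_nonneg _
  have haA : a ^ 2 = ∑ i, ∑ j, A i j ^ 2 := Real.sq_sqrt (by positivity)
  have hrη : r ^ 2 = ∑ i, ∑ j, η i j ^ 2 := Real.sq_sqrt (by positivity)
  have hPa : P = p * a := by rw [hp, div_mul_cancel₀ P ha0.ne']
  have hq2 : q ^ 2 = r ^ 2 - p ^ 2 := by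
    have h1 : q ^ 2 = ∑ i, ∑ j, (η i j - (p / a) * A i j) ^ 2 := by
      rw [hq]
      unfold frob
      rw [Real.sq_sqrt (by positivity)]
      simp [Matrix.sub_apply, Matrix.smul_apply, smul_eq_mul]
    have h2 : ∑ i, ∑ j, (η i j - (p / a) * A i j) ^ 2
        = (∑ i, ∑ j, η i j ^ 2) - 2 * (p / a) * P + (p / a) ^ 2 * (∑ i, ∑ j, A i j ^ 2) := by
      rw [Finset.mul_sum, Finset.mul_sum, ← Finset.sum_sub_distrib, ← Finset.sum_add_distrib]
      refine Finset.sum_congr rfl fun i _ => ?_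
      rw [Finset.mul_sum, Finset.mul_sum, ← Finset.sum_sub_distrib,
        ← Finset.sum_add_distrib]
      exact Finset.sum_congr rfl fun j _ => by ring
    rw [h1, h2, ← hrη, ← haA, hPa]
    field_simp
    ring
  clear_value q r p P a
  have habs : |p| ≤ r := by
    nlinarith [sq_abs p, sq_nonneg q, abs_nonneg p]
  have hqr : q ≤ r := by nlinarith [sq_abs p, abs_nonneg p]
  have hmin : r - 1 / 4 ≤ min (r ^ 2) r :=
    le_min (by nlinarith [sq_nonneg (r - 1 / 2)]) (by linarith)
  have hg : r - p ≤ min (r ^ 2) r - (p - 1 / 4) := by linarith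
  have hg0 : 0 ≤ min (r ^ 2) r - (p - 1 / 4) := by
    have : p ≤ |p| := le_abs_self p
    linarith
  by_cases hcase : q ≤ ε * (|p| + 1)
  · have : 0 ≤ 4 / ε * (min (r ^ 2) r - (p - 1 / 4)) := by positivity
    linarith
  · push_neg at hcase
    have habs0 : 0 ≤ |p| := abs_nonneg p
    have key : ε * q ≤ 4 * (r - p) := by
      rcases le_or_gt p 0 with hple | hpgt
      · -- p ≤ 0 : r - p ≥ r ≥ q, and ε ≤ 1 so ε q ≤ q ≤ 4(r - p)
        nlinarith
      · -- p > 0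
        have hap : |p| = p := abs_of_pos hpgt
        have hqpos : 0 < q := lt_of_le_of_lt (by positivity) hcase
        rw [hap] at hcase
        have hrpq : r ≤ p + q := by
          nlinarith [sq_nonneg (p + q - r), mul_nonneg hpgt.le hq0]
        have hppos : 0 < r + p := by linarith
        -- (r - p)(r + p) = q², and ε q (r + p) < 4 q²
        have hfact : (r - p) * (r + p) = q ^ 2 := by linear_combination -hq2
        have h1 : ε * p < q := by nlinarith
        have t1 : ε * q * (r + p) ≤ ε * q * (2 * p + q) :=
          mul_le_mul_of_nonneg_left (by linarith) (by positivity)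
        have t3 : (ε * p) * q < q * q := mul_lt_mul_of_pos_right h1 hqpos
        have t4 : ε * q ^ 2 ≤ q ^ 2 := by nlinarith [sq_nonneg q]
        have h2 : ε * q * (r + p) < 4 * q ^ 2 := by nlinarith [sq_nonneg q]
        nlinarith [h2, hfact, hppos]
    have step : q ≤ 4 / ε * (r - p) := by
      rw [div_mul_eq_mul_div, le_div_iff₀ hε0, mul_comm]
      exact key
    have mono : 4 / ε * (r - p) ≤ 4 / ε * (min (r ^ 2) r - (p - 1 / 4)) := by
      have : (0 : ℝ) ≤ 4 / ε := by positivity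
      exact mul_le_mul_of_nonneg_left hg this
    have : 0 ≤ ε * (|p| + 1) := by positivity
    linarith
end
end

section
/- Let Ψ : ℝ^{m×n} → [0,∞) be continuous with max(|ξ|²/c − c, 0) ≤ Ψ(ξ) ≤ c(|ξ|² + 1), ℓ > 0, h(ξ) := min(Ψ(ξ), ℓ Ψ(ξ)^{1/2}). Then for every ξ ∈ ℝ^{m×n}, the recession function of the quasiconvex envelope satisfies h^{qc,∞}(ξ) = ℓ·(Ψ^{1/2})^{qc,∞}(ξ), where for a function F with linear growth, F^{qc,∞}(ξ) := limsup_{t→∞} F^qc(tξ)/t. -/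
open MeasureTheory Filter Set

noncomputable section

/-! ### Auxiliary lemmas -/

lemma vol_unitCube (n : ℕ) : volume (unitCube n) = 1 := by
  simp [unitCube, volume_pi_pi]

lemma measSet_unitCube (n : ℕ) : MeasurableSet (unitCube n) :=
  (isOpen_set_pi Set.finite_univ (fun _ _ => isOpen_Ioo)).measurableSet

lemma zero_mem_testFuns (m n : ℕ) : (fun _ : Fin n → ℝ => (0 : Fin m → ℝ)) ∈ testFuns m n := by
  refine ⟨contDiff_const, ?_, ?_⟩
  · have : tsupport (fun _ : Fin n → ℝ => (0 : Fin m → ℝ)) = ∅ := by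
      simp [tsupport, Function.support]
    rw [HasCompactSupport, this]; exact isCompact_empty
  · have : tsupport (fun _ : Fin n → ℝ => (0 : Fin m → ℝ)) = ∅ := by
      simp [tsupport, Function.support]
    rw [this]; exact empty_subset _

lemma gradMatrix_zero {m n : ℕ} (x : Fin n → ℝ) :
    gradMatrix (fun _ : Fin n → ℝ => (0 : Fin m → ℝ)) x = 0 := by
  funext i j
  simp [gradMatrix, fderiv_const]

lemma continuous_gradMatrix {m n : ℕ} {φ : (Fin n → ℝ) → (Fin m → ℝ)}
    (hφ : ContDiff ℝ (⊤ : ℕ∞) φ) : Continuous (gradMatrix φ) := by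
  have h1 : Continuous (fderiv ℝ φ) := hφ.continuous_fderiv (by simp)
  refine continuous_pi fun i => continuous_pi fun j => ?_
  exact (continuous_apply i).comp (h1.clm_apply continuous_const)

lemma integrableOn_comp {m n : ℕ} (F : Matrix (Fin m) (Fin n) ℝ → ℝ) (hF : Continuous F)
    (ξ : Matrix (Fin m) (Fin n) ℝ) {φ : (Fin n → ℝ) → (Fin m → ℝ)} (hφ : ContDiff ℝ (⊤ : ℕ∞) φ) :
    IntegrableOn (fun x => F (ξ + gradMatrix φ x)) (unitCube n) := by
  have hcont : Continuous fun x => F (ξ + gradMatrix φ x) :=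
    hF.comp (continuous_const.add (continuous_gradMatrix hφ))
  have hK : IsCompact (Set.univ.pi fun _ : Fin n => Set.Icc (0:ℝ) 1) :=
    isCompact_univ_pi fun _ => isCompact_Icc
  exact (hcont.continuousOn.integrableOn_compact hK).mono_set
    (Set.pi_mono fun i _ => Set.Ioo_subset_Icc_self)

section QC
variable {m n : ℕ} {F G : Matrix (Fin m) (Fin n) ℝ → ℝ}

def qcSet (F : Matrix (Fin m) (Fin n) ℝ → ℝ) (ξ : Matrix (Fin m) (Fin n) ℝ) : Set ℝ :=
  {y | ∃ φ ∈ testFuns m n, y = ∫ x in unitCube n, F (ξ + gradMatrix φ x)}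

lemma qcEnv_eq (ξ) : qcEnv F ξ = sInf (qcSet F ξ) := rfl

lemma self_mem_qcSet (ξ) : F ξ ∈ qcSet F ξ := by
  refine ⟨_, zero_mem_testFuns m n, ?_⟩
  have : ∀ x : Fin n → ℝ, F (ξ + gradMatrix (fun _ : Fin n → ℝ => (0 : Fin m → ℝ)) x) = F ξ := by
    intro x; rw [gradMatrix_zero, add_zero]
  rw [setIntegral_congr_fun (measSet_unitCube n) (fun x _ => this x)]
  rw [setIntegral_const, measureReal_def, vol_unitCube]
  simp

lemma qcSet_nonempty (ξ) : (qcSet F ξ).Nonempty := ⟨_, self_mem_qcSet ξ⟩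

lemma qcSet_nonneg (hF0 : ∀ η, 0 ≤ F η) (ξ) : ∀ y ∈ qcSet F ξ, (0:ℝ) ≤ y := by
  rintro y ⟨φ, hφ, rfl⟩
  exact setIntegral_nonneg (measSet_unitCube n) fun x _ => hF0 _

lemma qcSet_bddBelow (hF0 : ∀ η, 0 ≤ F η) (ξ) : BddBelow (qcSet F ξ) :=
  ⟨0, fun y hy => qcSet_nonneg hF0 ξ y hy⟩

lemma qcEnv_nonneg (hF0 : ∀ η, 0 ≤ F η) (ξ) : 0 ≤ qcEnv F ξ :=
  le_csInf (qcSet_nonempty ξ) (qcSet_nonneg hF0 ξ)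

lemma qcEnv_le_self (hF0 : ∀ η, 0 ≤ F η) (ξ) : qcEnv F ξ ≤ F ξ :=
  csInf_le (qcSet_bddBelow hF0 ξ) (self_mem_qcSet ξ)

lemma qcEnv_le_mul {ℓ : ℝ} (hℓ : 0 < ℓ) (hFc : Continuous F) (hGc : Continuous G)
    (hF0 : ∀ η, 0 ≤ F η) (hle : ∀ η, F η ≤ ℓ * G η) (ξ) :
    qcEnv F ξ ≤ ℓ * qcEnv G ξ := by
  rw [qcEnv_eq, qcEnv_eq, ← div_le_iff₀' hℓ]
  refine le_csInf (qcSet_nonempty ξ) ?_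
  rintro y ⟨φ, hφ, rfl⟩
  rw [div_le_iff₀' hℓ, ← integral_const_mul]
  refine le_trans (csInf_le (qcSet_bddBelow hF0 ξ) ⟨φ, hφ, rfl⟩) ?_
  exact setIntegral_mono_on (integrableOn_comp F hFc ξ hφ.1)
    ((integrableOn_comp G hGc ξ hφ.1).const_mul ℓ) (measSet_unitCube n)
    (fun x _ => hle _)

lemma mul_sub_le_qcEnv {ℓ k : ℝ} (hℓ : 0 ≤ ℓ) (hFc : Continuous F) (hGc : Continuous G)
    (hG0 : ∀ η, 0 ≤ G η) (hge : ∀ η, ℓ * G η - k ≤ F η) (ξ) :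
    ℓ * qcEnv G ξ - k ≤ qcEnv F ξ := by
  rw [qcEnv_eq, qcEnv_eq]
  refine le_csInf (qcSet_nonempty ξ) ?_
  rintro y ⟨φ, hφ, rfl⟩
  have hint : (∫ x in unitCube n, (ℓ * G (ξ + gradMatrix φ x) - k))
      = ℓ * (∫ x in unitCube n, G (ξ + gradMatrix φ x)) - k := by
    rw [integral_sub ((integrableOn_comp G hGc ξ hφ.1).const_mul ℓ)
      ((integrableOn_const_iff).mpr (Or.inr (by rw [vol_unitCube]; exact ENNReal.one_lt_top)))]
    rw [integral_const_mul, setIntegral_const, measureReal_def, vol_unitCube]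
    simp
  have h1 : ℓ * sInf (qcSet G ξ) - k ≤ ℓ * (∫ x in unitCube n, G (ξ + gradMatrix φ x)) - k := by
    have := csInf_le (qcSet_bddBelow hG0 ξ) (⟨φ, hφ, rfl⟩ : _ ∈ qcSet G ξ)
    nlinarith
  refine h1.trans ?_
  rw [← hint]
  exact setIntegral_mono_on
    (by
      refine Integrable.sub ((integrableOn_comp G hGc ξ hφ.1).const_mul ℓ) ?_
      exact (integrableOn_const_iff).mpr (Or.inr (by rw [vol_unitCube]; exact ENNReal.one_lt_top)))
    (integrableOn_comp F hFc ξ hφ.1) (measSet_unitCube n) (fun x _ => hge _)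
end QC

lemma limsup_mul_aux {u v : ℝ → ℝ} {l K : ℝ} (hl : 0 < l)
    (hv0 : ∀ᶠ t in atTop, 0 ≤ v t) (hvK : ∀ᶠ t in atTop, v t ≤ K)
    (hu0 : ∀ᶠ t in atTop, 0 ≤ u t) (hule : ∀ᶠ t in atTop, u t ≤ l * v t)
    (huge : ∀ ε : ℝ, 0 < ε → ∀ᶠ t in atTop, l * v t - ε ≤ u t) :
    limsup u atTop = l * limsup v atTop := by
  have bd_v : IsBoundedUnder (· ≤ ·) atTop v := isBoundedUnder_of_eventually_le hvK
  have co_v : IsCoboundedUnder (· ≤ ·) atTop v :=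
    IsBoundedUnder.isCoboundedUnder_le ⟨0, eventually_map.2 hv0⟩
  have hlv0 : ∀ᶠ t in atTop, 0 ≤ l * v t := hv0.mono fun t h => mul_nonneg hl.le h
  have hlvK : ∀ᶠ t in atTop, l * v t ≤ l * K :=
    hvK.mono fun t h => mul_le_mul_of_nonneg_left h hl.le
  have bd_lv : IsBoundedUnder (· ≤ ·) atTop (fun t => l * v t) :=
    isBoundedUnder_of_eventually_le hlvK
  have co_lv : IsCoboundedUnder (· ≤ ·) atTop (fun t => l * v t) :=
    IsBoundedUnder.isCoboundedUnder_le ⟨0, eventually_map.2 hlv0⟩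
  have bd_u : IsBoundedUnder (· ≤ ·) atTop u :=
    isBoundedUnder_of_eventually_le (a := l * K)
      ((hule.and hlvK).mono fun t ⟨h1, h2⟩ => h1.trans h2)
  have co_u : IsCoboundedUnder (· ≤ ·) atTop u :=
    IsBoundedUnder.isCoboundedUnder_le ⟨0, eventually_map.2 hu0⟩
  have step1 : limsup (fun t => l * v t) atTop = l * limsup v atTop := by
    have := (OrderIso.mulLeft₀ l hl).limsup_apply (u := v) bd_v co_v
      (by simpa using bd_lv) (by simpa using co_lv)
    simpa using this.symm
  refine le_antisymm ?_ ?_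
  · calc limsup u atTop ≤ limsup (fun t => l * v t) atTop :=
        limsup_le_limsup hule co_u bd_lv
      _ = l * limsup v atTop := step1
  · refine le_of_forall_sub_le fun ε hε => ?_
    have co_w : IsCoboundedUnder (· ≤ ·) atTop (fun t => l * v t - ε) :=
      IsBoundedUnder.isCoboundedUnder_le ⟨-ε, eventually_map.2
        (hlv0.mono fun t h => by linarith)⟩
    have bd_w : IsBoundedUnder (· ≤ ·) atTop (fun t => l * v t - ε) :=
      isBoundedUnder_of_eventually_le (a := l * K - ε)
        (hlvK.mono fun t h => by linarith)
    have step2 : limsup (fun t => l * v t - ε) atTop = limsup (fun t => l * v t) atTop - ε := by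
      have := (OrderIso.addRight (-ε)).limsup_apply (u := fun t => l * v t)
        bd_lv co_lv (by simpa [sub_eq_add_neg] using bd_w) (by simpa [sub_eq_add_neg] using co_w)
      simp only [OrderIso.addRight_apply] at this
      rw [← sub_eq_add_neg] at this
      simpa [sub_eq_add_neg] using this.symm
    calc l * limsup v atTop - ε = limsup (fun t => l * v t - ε) atTop := by rw [step2, step1]
      _ ≤ limsup u atTop := limsup_le_limsup (huge ε hε) co_w bd_u

theorem stmt10 (m n : ℕ) (c ℓ : ℝ) (hc : 1 ≤ c) (hℓ : 0 < ℓ)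
    (Ψ : Matrix (Fin m) (Fin n) ℝ → ℝ) (hΨc : Continuous Ψ) (hΨ0 : ∀ ξ, 0 ≤ Ψ ξ)
    (hlb : ∀ ξ, max ((frob ξ) ^ 2 / c - c) 0 ≤ Ψ ξ)
    (hub : ∀ ξ, Ψ ξ ≤ c * ((frob ξ) ^ 2 + 1)) :
    ∀ ξ, recession (qcEnv (fun η => min (Ψ η) (ℓ * Real.sqrt (Ψ η)))) ξ
        = ℓ * recession (qcEnv (fun η => Real.sqrt (Ψ η))) ξ := by
  intro ξ
  set G : Matrix (Fin m) (Fin n) ℝ → ℝ := fun η => Real.sqrt (Ψ η) with hG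
  set H : Matrix (Fin m) (Fin n) ℝ → ℝ := fun η => min (Ψ η) (ℓ * Real.sqrt (Ψ η)) with hH
  have hGc : Continuous G := Real.continuous_sqrt.comp hΨc
  have hHc : Continuous H := hΨc.min (continuous_const.mul hGc)
  have hG0 : ∀ η, 0 ≤ G η := fun η => Real.sqrt_nonneg _
  have hH0 : ∀ η, 0 ≤ H η := fun η => le_min (hΨ0 η) (mul_nonneg hℓ.le (hG0 η))
  have hHle : ∀ η, H η ≤ ℓ * G η := fun η => min_le_right _ _
  have hHge : ∀ η, ℓ * G η - ℓ ^ 2 ≤ H η := by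
    intro η
    have hs : Real.sqrt (Ψ η) ^ 2 = Ψ η := Real.sq_sqrt (hΨ0 η)
    refine le_min ?_ ?_
    · nlinarith [sq_nonneg (Real.sqrt (Ψ η) - ℓ), mul_nonneg hℓ.le (Real.sqrt_nonneg (Ψ η))]
    · nlinarith [sq_nonneg ℓ]
  have hc0 : (0:ℝ) < c := lt_of_lt_of_le one_pos hc
  have hF0 : 0 ≤ frob ξ := Real.sqrt_nonneg _
  have frobsq : ∀ t : ℝ, frob (t • ξ) ^ 2 = t ^ 2 * frob ξ ^ 2 := by
    intro t
    unfold frob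
    rw [Real.sq_sqrt (by positivity), Real.sq_sqrt (by positivity), Finset.mul_sum]
    refine Finset.sum_congr rfl fun i _ => ?_
    rw [Finset.mul_sum]
    refine Finset.sum_congr rfl fun j _ => ?_
    simp [Matrix.smul_apply, mul_pow]
  have hbound : ∀ t : ℝ, 1 ≤ t →
      qcEnv G (t • ξ) ≤ Real.sqrt c * (frob ξ + 1) * t := by
    intro t ht
    have ht0 : (0:ℝ) ≤ t := le_trans zero_le_one ht
    have h2 : Ψ (t • ξ) ≤ c * (t ^ 2 * frob ξ ^ 2 + 1) := by
      rw [← frobsq]; exact hub _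
    have hsq : Real.sqrt c ^ 2 = c := Real.sq_sqrt hc0.le
    have ht2 : (1:ℝ) ≤ t ^ 2 := by nlinarith
    have h3 : c * (t ^ 2 * frob ξ ^ 2 + 1) ≤ (Real.sqrt c * (frob ξ + 1) * t) ^ 2 := by
      rw [mul_pow, mul_pow, hsq]
      nlinarith [mul_nonneg (mul_nonneg hc0.le hF0) (sq_nonneg t),
        mul_nonneg hc0.le (by linarith : (0:ℝ) ≤ t ^ 2 - 1)]
    calc qcEnv G (t • ξ) ≤ G (t • ξ) := qcEnv_le_self hG0 _
      _ ≤ Real.sqrt ((Real.sqrt c * (frob ξ + 1) * t) ^ 2) :=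
        Real.sqrt_le_sqrt (h2.trans h3)
      _ = Real.sqrt c * (frob ξ + 1) * t :=
        Real.sqrt_sq (by positivity)
  show limsup (fun t : ℝ => qcEnv H (t • ξ) / t) atTop
      = ℓ * limsup (fun t : ℝ => qcEnv G (t • ξ) / t) atTop
  refine limsup_mul_aux (K := Real.sqrt c * (frob ξ + 1)) hℓ ?_ ?_ ?_ ?_ ?_
  · filter_upwards [eventually_ge_atTop (1:ℝ)] with t ht
    exact div_nonneg (qcEnv_nonneg hG0 _) (le_trans zero_le_one ht)
  · filter_upwards [eventually_ge_atTop (1:ℝ)] with t ht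
    have ht0 : (0:ℝ) < t := lt_of_lt_of_le one_pos ht
    rw [div_le_iff₀ ht0]
    exact hbound t ht
  · filter_upwards [eventually_ge_atTop (1:ℝ)] with t ht
    exact div_nonneg (qcEnv_nonneg hH0 _) (le_trans zero_le_one ht)
  · filter_upwards [eventually_ge_atTop (1:ℝ)] with t ht
    have ht0 : (0:ℝ) < t := lt_of_lt_of_le one_pos ht
    have := qcEnv_le_mul hℓ hHc hGc hH0 hHle (t • ξ)
    rw [← mul_div_assoc]
    exact div_le_div_of_nonneg_right this ht0.le
  · intro ε hε
    filter_upwards [eventually_ge_atTop (max 1 (ℓ ^ 2 / ε))] with t ht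
    have ht1 : (1:ℝ) ≤ t := le_trans (le_max_left _ _) ht
    have ht0 : (0:ℝ) < t := lt_of_lt_of_le one_pos ht1
    have h5 : ℓ * qcEnv G (t • ξ) - ℓ ^ 2 ≤ qcEnv H (t • ξ) :=
      mul_sub_le_qcEnv hℓ.le hHc hGc hG0 hHge (t • ξ)
    have h6 : ℓ ^ 2 / t ≤ ε := by
      rw [div_le_iff₀ ht0]
      have h7 : ℓ ^ 2 / ε ≤ t := le_trans (le_max_right _ _) ht
      calc ℓ ^ 2 = ε * (ℓ ^ 2 / ε) := by field_simp
        _ ≤ ε * t := by nlinarith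
    have h8 : (ℓ * qcEnv G (t • ξ) - ℓ ^ 2) / t ≤ qcEnv H (t • ξ) / t :=
      div_le_div_of_nonneg_right h5 ht0.le
    rw [sub_div, mul_div_assoc] at h8
    linarith
end
end
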